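/- arXiv:2411.07804 — 6 statements merged into one kernel-verified Lean document; each statement's English description precedes it below -/
import Mathlib

section
/- Let (ℬ, 𝒜, i, e, l) be a cleft extension of abelian categories. For every n ≥ 1 and every object A of 𝒜 there is a short exact sequence 0 → Gⁿ(A) → l(F^{n-1}(e(A))) → G^{n-1}(A) → 0 in 𝒜. -/
open CategoryTheory Limits

universe v u v' u'

/-- The `n`-th power of an endofunctor. -/
def fpow {C : Type u} [Category.{v} C] (G : C ⥤ C) : ℕ → (C ⥤ C)
  | 0 => 𝟭 C
  | n + 1 => fpow G n ⋙ G

/-- The kernel of a split epimorphism is isomorphic to the cokernel of a section of it. -/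
noncomputable def cokernelSectionIsoKernel {C : Type u} [Category.{v} C] [Abelian C]
    {A B : C} (p : A ⟶ B) (s : B ⟶ A) (hs : s ≫ p = 𝟙 B) :
    cokernel s ≅ kernel p := by
  refine ⟨cokernel.desc s (kernel.lift p (𝟙 A - p ≫ s) (by simp [hs])) (by apply (cancel_mono (kernel.ι p)).1; rw [Category.assoc, kernel.lift_ι, Preadditive.comp_sub, Category.comp_id, ← Category.assoc, hs, Category.id_comp, sub_self, zero_comp]),
    kernel.ι p ≫ cokernel.π s, ?_, ?_⟩
  · apply coequalizer.hom_ext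
    have h : kernel.lift p (𝟙 A - p ≫ s) (by simp [hs]) ≫ kernel.ι p = 𝟙 A - p ≫ s :=
      kernel.lift_ι _ _ _
    simp only [cokernel.π_desc_assoc, Category.comp_id]
    rw [reassoc_of% h]
    simp
  · apply (cancel_mono (kernel.ι p)).1
    simp [kernel.condition_assoc]

/-- Let `(ℬ, 𝒜, i, e, l)` be a cleft extension of abelian categories, with
induced endofunctors `G : 𝒜 ⥤ 𝒜` (where `G(A)` is the kernel of the counit `μ_A : l(e(A)) → A`)
and `F : ℬ ⥤ ℬ` (where `F(B) = e(G(i(B)))`).  For every `n ≥ 1` and every object `A` of `𝒜`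
there is a short exact sequence `0 → Gⁿ(A) → l(F^{n-1}(e(A))) → G^{n-1}(A) → 0` in `𝒜`. -/
theorem cleftExtension_ses_of_powers
    {𝒜 : Type u} [Category.{v} 𝒜] [Abelian 𝒜] [EnoughProjectives 𝒜]
    {ℬ : Type u'} [Category.{v'} ℬ] [Abelian ℬ] [EnoughProjectives ℬ]
    (i : ℬ ⥤ 𝒜) (e : 𝒜 ⥤ ℬ) (l : ℬ ⥤ 𝒜)
    [i.Additive] [e.Additive] [l.Additive]
    [e.Faithful] [PreservesFiniteLimits e] [PreservesFiniteColimits e]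
    (adj : l ⊣ e) (η : i ⋙ e ≅ 𝟭 ℬ)
    (G : 𝒜 ⥤ 𝒜) (κ : G ⟶ e ⋙ l) (hκ : ∀ X : 𝒜, κ.app X ≫ adj.counit.app X = 0)
    (hker : ∀ X : 𝒜, IsLimit (KernelFork.ofι (κ.app X) (hκ X)))
    (F : ℬ ⥤ ℬ) (hF : F ≅ i ⋙ G ⋙ e)
    (n : ℕ) (hn : 1 ≤ n) (A : 𝒜) :
    ∃ (f : (fpow G n).obj A ⟶ l.obj ((fpow F (n - 1)).obj (e.obj A)))
      (g : l.obj ((fpow F (n - 1)).obj (e.obj A)) ⟶ (fpow G (n - 1)).obj A)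
      (w : f ≫ g = 0), (ShortComplex.mk f g w).ShortExact := by
  -- `e (G X)` is the kernel of `e (μ_X)`
  have keriso : ∀ X : 𝒜, e.obj (G.obj X) ≅ kernel (e.map (adj.counit.app X)) := fun X =>
    IsLimit.conePointUniqueUpToIso (KernelFork.mapIsLimit _ (hker X) e)
      (limit.isLimit _)
  -- `e (G X)` is the cokernel of the unit at `e X`
  have cokiso : ∀ X : 𝒜, e.obj (G.obj X) ≅ cokernel (adj.unit.app (e.obj X)) := fun X =>
    (keriso X) ≪≫ (cokernelSectionIsoKernel (e.map (adj.counit.app X))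
      (adj.unit.app (e.obj X)) (adj.right_triangle_components X)).symm
  -- the step isomorphism `F (e X) ≅ e (G X)`
  have step : ∀ X : 𝒜, F.obj (e.obj X) ≅ e.obj (G.obj X) := fun X =>
    hF.app (e.obj X) ≪≫ cokiso (i.obj (e.obj X)) ≪≫
      cokernel.mapIso _ (adj.unit.app (e.obj X)) (η.app (e.obj X))
        ((l ⋙ e).mapIso (η.app (e.obj X)))
        (adj.unit.naturality (η.hom.app (e.obj X))).symm ≪≫ (cokiso X).symm
  -- the power isomorphism by induction
  have pow : ∀ m : ℕ, ∀ X : 𝒜, (fpow F m).obj (e.obj X) ≅ e.obj ((fpow G m).obj X) := by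
    intro m
    induction m with
    | zero => exact fun X => Iso.refl _
    | succ k ih => exact fun X => F.mapIso (ih X) ≪≫ step ((fpow G k).obj X)
  obtain ⟨m, rfl⟩ : ∃ m, n = m + 1 := ⟨n - 1, by omega⟩
  set X := (fpow G m).obj A with hX
  refine ⟨κ.app X ≫ l.map (pow m A).inv, l.map (pow m A).hom ≫ adj.counit.app X, ?_, ?_⟩
  · show (κ.app X ≫ l.map (pow m A).inv) ≫ l.map (pow m A).hom ≫ adj.counit.app X = 0
    rw [Category.assoc, ← Functor.map_comp_assoc, Iso.inv_hom_id, l.map_id,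
      Category.id_comp, hκ]
  · have h0 : (ShortComplex.mk (κ.app X) (adj.counit.app X) (hκ X)).ShortExact := by
      have hm : Mono (κ.app X) := mono_of_isLimit_fork (hker X)
      have hepi : Epi (e.map (adj.counit.app X)) := by
        have : IsSplitEpi (e.map (adj.counit.app X)) :=
          IsSplitEpi.mk' ⟨adj.unit.app (e.obj X), adj.right_triangle_components X⟩
        infer_instance
      have he : Epi (adj.counit.app X) := e.epi_of_epi_map hepi
      exact ShortComplex.ShortExact.mk'
        ((ShortComplex.mk (κ.app X) (adj.counit.app X) (hκ X)).exact_of_f_is_kernel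
          (hker X)) hm he
    refine ShortComplex.shortExact_of_iso ?_ h0
    exact ShortComplex.isoMk (Iso.refl _) (l.mapIso (pow m A).symm) (Iso.refl _)
      (by simp; exact Category.id_comp _) (by simp)
end

section
/- Let (ℬ, 𝒜, i, e, r) be a cleft coextension of abelian categories and n ≥ 1. Then F'ⁿ = 0 if and only if G'ⁿ = 0. -/
/-!
The left adjoint `e` preserves the cokernel `G' A` of `ν'_A`, so `e(G' A)` is the cokernel of
`e(ν'_A)`, a split monomorphism with retraction the counit `ε_{e A}`; hence `e(G' A)` is the
kernel of `ε_{e A}` and depends only on `e A`. Since `e ∘ i ≅ Id`, this yields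
`e(G'(i(e A))) ≅ e(G' A)`, and by induction `F'ⁿ(e A) ≅ e(G'ⁿ A)`. As `e` is faithful it
reflects zero objects, so `F'ⁿ` vanishes on the objects `e A` iff `G'ⁿ = 0`, and every `B` is
of this form up to isomorphism, namely `B ≅ e(i B)`.
-/

open CategoryTheory Limits

universe v u v' u'

noncomputable def cokernelIsoKernelOfRetraction {C : Type*} [Category C] [Preadditive C]
    {X Z : C} (m : X ⟶ Z) (ρ : Z ⟶ X) (w : m ≫ ρ = 𝟙 X) [HasCokernel m] [HasKernel ρ] :
    cokernel m ≅ kernel ρ where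
  hom := cokernel.desc m (kernel.lift ρ (𝟙 Z - ρ ≫ m)
      (by simp [Preadditive.sub_comp, w]))
      (by ext; simp [Preadditive.comp_sub, reassoc_of% w])
  inv := kernel.ι ρ ≫ cokernel.π m
  hom_inv_id := by
    apply coequalizer.hom_ext
    simp [Preadditive.sub_comp, cokernel.condition]
  inv_hom_id := by
    apply equalizer.hom_ext
    simp [Preadditive.comp_sub]

theorem CategoryTheory.Functor.isZero_obj_iff_of_faithful {C D : Type*} [Category C] [Category D]
    [HasZeroMorphisms C] [HasZeroMorphisms D] (F : C ⥤ D) [F.PreservesZeroMorphisms]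
    [F.Faithful] (X : C) : IsZero (F.obj X) ↔ IsZero X := by
  refine ⟨fun h => ?_, F.map_isZero⟩
  rw [IsZero.iff_id_eq_zero] at h ⊢
  exact F.zero_of_map_zero _ (by rw [F.map_id, h])

namespace CleftCoextension

variable {𝒜 : Type u} [Category.{v} 𝒜] [HasZeroMorphisms 𝒜]
  {ℬ : Type u'} [Category.{v'} ℬ] [Preadditive ℬ] [HasKernels ℬ] [HasCokernels ℬ]
  {e : 𝒜 ⥤ ℬ} {r : ℬ ⥤ 𝒜} (adj : e ⊣ r)
  {G' : 𝒜 ⥤ 𝒜} {p : (e ⋙ r : 𝒜 ⥤ 𝒜) ⟶ G'} {hp : ∀ X : 𝒜, adj.unit.app X ≫ p.app X = 0}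
  (hcoker : ∀ X : 𝒜, IsColimit (CokernelCofork.ofπ (p.app X) (hp X)))

noncomputable def mapCokernelUnitIsoKernelCounit (X : 𝒜) :
    e.obj (G'.obj X) ≅ kernel (adj.counit.app (e.obj X)) :=
  have := adj.isLeftAdjoint
  IsColimit.coconePointUniqueUpToIso (isColimitCoforkMapOfIsColimit' e (hp X) (hcoker X))
      (colimit.isColimit _) ≪≫
    cokernelIsoKernelOfRetraction _ _ (adj.left_triangle_components X)

noncomputable def mapCokernelUnitIsoOfMapIso {X Y : 𝒜} (φ : e.obj X ≅ e.obj Y) :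
    e.obj (G'.obj X) ≅ e.obj (G'.obj Y) :=
  mapCokernelUnitIsoKernelCounit adj hcoker X ≪≫
    kernel.mapIso _ _ ((r ⋙ e).mapIso φ) φ (adj.counit.naturality φ.hom).symm ≪≫
    (mapCokernelUnitIsoKernelCounit adj hcoker Y).symm

variable {i : ℬ ⥤ 𝒜} (η : i ⋙ e ≅ 𝟭 ℬ) {F' : ℬ ⥤ ℬ} (hF' : F' ≅ i ⋙ G' ⋙ e)

noncomputable def fpowObjMapIso : (m : ℕ) → (X : 𝒜) →
    ((fpow F' m).obj (e.obj X) ≅ e.obj ((fpow G' m).obj X))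
  | 0, _ => Iso.refl _
  | m + 1, X => F'.mapIso (fpowObjMapIso m X) ≪≫ hF'.app _ ≪≫
      mapCokernelUnitIsoOfMapIso adj hcoker (η.app _)

end CleftCoextension

open CleftCoextension in
theorem cleftCoextension_power_isZero_iff_general
    {𝒜 : Type u} [Category.{v} 𝒜] [Abelian 𝒜]
    {ℬ : Type u'} [Category.{v'} ℬ] [Abelian ℬ]
    (i : ℬ ⥤ 𝒜) (e : 𝒜 ⥤ ℬ) (r : ℬ ⥤ 𝒜)
    [e.Faithful]
    (adj : e ⊣ r) (η : i ⋙ e ≅ 𝟭 ℬ)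
    (G' : 𝒜 ⥤ 𝒜) (p : (e ⋙ r : 𝒜 ⥤ 𝒜) ⟶ G')
    (hp : ∀ X : 𝒜, adj.unit.app X ≫ p.app X = 0)
    (hcoker : ∀ X : 𝒜, IsColimit (CokernelCofork.ofπ (p.app X) (hp X)))
    (F' : ℬ ⥤ ℬ) (hF' : F' ≅ i ⋙ G' ⋙ e)
    (n : ℕ) :
    (∀ B : ℬ, IsZero ((fpow F' n).obj B)) ↔ (∀ A : 𝒜, IsZero ((fpow G' n).obj A)) := by
  have := adj.isLeftAdjoint
  let φ := fpowObjMapIso adj hcoker η hF' n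
  constructor
  · intro hF A
    rw [← e.isZero_obj_iff_of_faithful]
    exact (hF (e.obj A)).of_iso (φ A).symm
  · intro hG B
    refine IsZero.of_iso ?_ ((fpow F' n).mapIso (η.app B).symm ≪≫ φ (i.obj B))
    exact (e.isZero_obj_iff_of_faithful _).2 (hG (i.obj B))

/-- Let `(ℬ, 𝒜, i, e, r)` be a cleft coextension of abelian categories, with
induced endofunctors `G' : 𝒜 ⥤ 𝒜` (where `G'(A)` is the cokernel of the unit
`ν'_A : A → r(e(A))`) and `F' : ℬ ⥤ ℬ` (where `F'(B) = e(G'(i(B)))`).  For every `n ≥ 1`,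
`F'ⁿ = 0` if and only if `G'ⁿ = 0`. -/
theorem cleftCoextension_power_isZero_iff
    {𝒜 : Type u} [Category.{v} 𝒜] [Abelian 𝒜] [EnoughProjectives 𝒜]
    {ℬ : Type u'} [Category.{v'} ℬ] [Abelian ℬ] [EnoughProjectives ℬ]
    (i : ℬ ⥤ 𝒜) (e : 𝒜 ⥤ ℬ) (r : ℬ ⥤ 𝒜)
    [i.Additive] [e.Additive] [r.Additive]
    [e.Faithful] [PreservesFiniteLimits e] [PreservesFiniteColimits e]
    (adj : e ⊣ r) (η : i ⋙ e ≅ 𝟭 ℬ)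
    (G' : 𝒜 ⥤ 𝒜) (p : (e ⋙ r : 𝒜 ⥤ 𝒜) ⟶ G')
    (hp : ∀ X : 𝒜, adj.unit.app X ≫ p.app X = 0)
    (hcoker : ∀ X : 𝒜, IsColimit (CokernelCofork.ofπ (p.app X) (hp X)))
    (F' : ℬ ⥤ ℬ) (hF' : F' ≅ i ⋙ G' ⋙ e)
    (n : ℕ) (hn : 1 ≤ n) :
    (∀ B : ℬ, IsZero ((fpow F' n).obj B)) ↔ (∀ A : 𝒜, IsZero ((fpow G' n).obj A)) :=
  cleftCoextension_power_isZero_iff_general i e r adj η G' p hp hcoker F' hF' n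
end

section
/- Let (ℬ, 𝒜, i, e, r) be a cleft coextension of abelian categories. For every n ≥ 1 and every object A of 𝒜 there is a short exact sequence 0 → G'^{n-1}(A) → r(F'^{n-1}(e(A))) → G'ⁿ(A) → 0 in 𝒜. -/
open CategoryTheory Limits

universe v u v' u'

/-- cokernel of a split mono is isomorphic to the kernel of the retraction -/
noncomputable def cokerSplitMonoIsoKer {C : Type u} [Category.{v} C] [Abelian C]
    {X M : C} (s : X ⟶ M) (t : M ⟶ X) (hst : s ≫ t = 𝟙 X) :
    cokernel s ≅ kernel t where
  hom := cokernel.desc s (kernel.lift t (𝟙 M - t ≫ s)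
      (by simp [Preadditive.sub_comp, Category.assoc, hst]))
    (by
      rw [← cancel_mono (kernel.ι t)]
      simp [Preadditive.comp_sub, reassoc_of% hst])
  inv := kernel.ι t ≫ cokernel.π s
  hom_inv_id := by
    rw [← cancel_epi (cokernel.π s)]
    simp [Preadditive.sub_comp, cokernel.condition]
  inv_hom_id := by
    rw [← cancel_mono (kernel.ι t)]
    simp [Preadditive.comp_sub, kernel.condition]

/-- Let `(ℬ, 𝒜, i, e, r)` be a cleft coextension of abelian categories, with
induced endofunctors `G' : 𝒜 ⥤ 𝒜` (where `G'(A)` is the cokernel of the unit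
`ν'_A : A → r(e(A))`) and `F' : ℬ ⥤ ℬ` (where `F'(B) = e(G'(i(B)))`).  For every `n ≥ 1` and
every object `A` of `𝒜` there is a short exact sequence
`0 → G'^{n-1}(A) → r(F'^{n-1}(e(A))) → G'ⁿ(A) → 0` in `𝒜`. -/
theorem cleftCoextension_ses_of_powers
    {𝒜 : Type u} [Category.{v} 𝒜] [Abelian 𝒜] [EnoughProjectives 𝒜]
    {ℬ : Type u'} [Category.{v'} ℬ] [Abelian ℬ] [EnoughProjectives ℬ]
    (i : ℬ ⥤ 𝒜) (e : 𝒜 ⥤ ℬ) (r : ℬ ⥤ 𝒜)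
    [i.Additive] [e.Additive] [r.Additive]
    [e.Faithful] [PreservesFiniteLimits e] [PreservesFiniteColimits e]
    (adj : e ⊣ r) (η : i ⋙ e ≅ 𝟭 ℬ)
    (G' : 𝒜 ⥤ 𝒜) (p : (e ⋙ r : 𝒜 ⥤ 𝒜) ⟶ G')
    (hp : ∀ X : 𝒜, adj.unit.app X ≫ p.app X = 0)
    (hcoker : ∀ X : 𝒜, IsColimit (CokernelCofork.ofπ (p.app X) (hp X)))
    (F' : ℬ ⥤ ℬ) (hF' : F' ≅ i ⋙ G' ⋙ e)
    (n : ℕ) (hn : 1 ≤ n) (A : 𝒜) :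
    ∃ (f : (fpow G' (n - 1)).obj A ⟶ r.obj ((fpow F' (n - 1)).obj (e.obj A)))
      (g : r.obj ((fpow F' (n - 1)).obj (e.obj A)) ⟶ (fpow G' n).obj A)
      (w : f ≫ g = 0), (ShortComplex.mk f g w).ShortExact := by
  -- e(G' X) ≅ kernel of the counit at e X
  have key : ∀ X : 𝒜, Nonempty (e.obj (G'.obj X) ≅ kernel (adj.counit.app (e.obj X))) := by
    intro X
    have h1 : IsColimit (CokernelCofork.ofπ (e.map (p.app X))
        ((CokernelCofork.ofπ (p.app X) (hp X)).map_condition e)) :=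
      CokernelCofork.mapIsColimit _ (hcoker X) e
    have iso1 := h1.coconePointUniqueUpToIso (cokernelIsCokernel (e.map (adj.unit.app X)))
    exact ⟨iso1 ≪≫ cokerSplitMonoIsoKer _ _ (adj.left_triangle_components X)⟩
  -- e(G'(i(e X))) ≅ e(G' X)
  have key2 : ∀ X : 𝒜, Nonempty (e.obj (G'.obj (i.obj (e.obj X))) ≅ e.obj (G'.obj X)) := by
    intro X
    obtain ⟨u⟩ := key (i.obj (e.obj X))
    obtain ⟨v⟩ := key X
    have hnat : e.map (r.map (η.hom.app (e.obj X))) ≫ adj.counit.app (e.obj X)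
        = adj.counit.app (e.obj (i.obj (e.obj X))) ≫ η.hom.app (e.obj X) :=
      adj.counit.naturality (η.hom.app (e.obj X))
    exact ⟨u ≪≫ (kernelCompMono (adj.counit.app (e.obj (i.obj (e.obj X))))
        (η.hom.app (e.obj X))).symm ≪≫ kernelIsoOfEq hnat.symm ≪≫
      kernelIsIsoComp _ _ ≪≫ v.symm⟩
  -- main induction: F'^k (e A) ≅ e (G'^k A)
  have main : ∀ k : ℕ, Nonempty ((fpow F' k).obj (e.obj A) ≅ e.obj ((fpow G' k).obj A)) := by
    intro k
    induction k with
    | zero => exact ⟨Iso.refl _⟩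
    | succ k ih =>
      obtain ⟨ψ⟩ := ih
      obtain ⟨χ⟩ := key2 ((fpow G' k).obj A)
      exact ⟨F'.mapIso ψ ≪≫ hF'.app (e.obj ((fpow G' k).obj A)) ≪≫
        (e.mapIso (G'.mapIso (i.mapIso (Iso.refl _)))) ≪≫ χ⟩
  obtain ⟨m, rfl⟩ : ∃ m, n = m + 1 := ⟨n - 1, (Nat.succ_pred_eq_of_pos hn).symm⟩
  obtain ⟨ψ⟩ := main m
  set X := (fpow G' m).obj A with hX
  -- the base short exact sequence 0 → X → r(eX) → G'X → 0
  have hmono : Mono (adj.unit.app X) := by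
    have : Mono (e.map (adj.unit.app X)) := by
      have : IsSplitMono (e.map (adj.unit.app X)) :=
        ⟨⟨⟨adj.counit.app (e.obj X), adj.left_triangle_components X⟩⟩⟩
      infer_instance
    exact e.mono_of_mono_map this
  have hepi : Epi (p.app X) := epi_of_isColimit_cofork (hcoker X)
  have hSE : (ShortComplex.mk (adj.unit.app X) (p.app X) (hp X)).ShortExact :=
    { exact := ShortComplex.exact_of_g_is_cokernel _ (hcoker X)
      mono_f := hmono
      epi_g := hepi }
  refine ⟨adj.unit.app X ≫ r.map ψ.inv, r.map ψ.hom ≫ p.app X, ?_, ?_⟩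
  · show (adj.unit.app X ≫ r.map ψ.inv) ≫ (r.map ψ.hom ≫ (p.app X : r.obj (e.obj X) ⟶ G'.obj X)) = 0
    rw [Category.assoc, ← Category.assoc (r.map ψ.inv), ← r.map_comp, ψ.inv_hom_id,
      r.map_id, Category.id_comp, hp]
  · refine ShortComplex.shortExact_of_iso ?_ hSE
    refine ShortComplex.isoMk (Iso.refl _) (r.mapIso ψ.symm) (Iso.refl _) ?_ ?_
    · simp
    · show r.map ψ.inv ≫ (r.map ψ.hom ≫ (p.app X : r.obj (e.obj X) ⟶ G'.obj X)) = p.app X ≫ 𝟙 (G'.obj X)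
      rw [← Category.assoc, ← r.map_comp, ψ.inv_hom_id, r.map_id, Category.id_comp, Category.comp_id]
end

section
/- Let (ℬ, 𝒜, i, e, l) be a cleft extension of abelian categories such that e preserves projective objects. Then IT(ℬ) ≤ IT(𝒜). -/
open CategoryTheory Limits

attribute [local instance] CategoryTheory.Limits.HasFiniteBiproducts.of_hasFiniteProducts

noncomputable section

universe v u v' u'

/-- `K` is a syzygy of `X`:  there is a short exact sequence `0 → K → P → X → 0`
with `P` projective. -/
def IsSyzygy {C : Type u} [Category.{v} C] [Abelian C] (K X : C) : Prop :=
  ∃ (P : C) (ι : K ⟶ P) (π : P ⟶ X) (w : ι ≫ π = 0),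
    Projective P ∧ (ShortComplex.mk ι π w).ShortExact

/-- `K` is an `n`-th syzygy of `X` (a `0`-th syzygy of `X` is `X` itself). -/
def IsNthSyzygy {C : Type u} [Category.{v} C] [Abelian C] : ℕ → C → C → Prop
  | 0, K, X => K = X
  | n + 1, K, X => ∃ Y : C, IsNthSyzygy n Y X ∧ IsSyzygy K Y

/-- `0 → X N → ⋯ → X 0 → 0` is exact. -/
def IsExactSeq {C : Type u} [Category.{v} C] [Abelian C] (N : ℕ) (X : ℕ → C)
    (d : ∀ n : ℕ, X (n + 1) ⟶ X n) : Prop :=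
  Mono (d (N - 1)) ∧ Epi (d 0) ∧
    ∀ i : ℕ, i + 2 ≤ N →
      ∃ w : d (i + 1) ≫ d i = 0, (ShortComplex.mk (d (i + 1)) (d i) w).Exact

/-- `X` belongs to `add U`: `X` is a direct summand of a finite direct sum of copies of `U`. -/
def InAdd {C : Type u} [Category.{v} C] [Abelian C] (U X : C) : Prop :=
  ∃ (n : ℕ) (s : X ⟶ ⨁ (fun _ : Fin n => U)) (p : (⨁ (fun _ : Fin n => U)) ⟶ X),
    s ≫ p = 𝟙 X

/-- `C` is an `(m, n)`-Igusa–Todorov category. -/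
def IsITCategory (C : Type u) [Category.{v} C] [Abelian C] (m n : ℕ) : Prop :=
  ∃ U : C, ∀ A : C, ∃ (ΩA : C), IsNthSyzygy n ΩA A ∧
    ∃ (Us : ℕ → C) (_ : ∀ k : ℕ, k ≤ m → InAdd U (Us k))
      (d : ∀ k : ℕ, (fun j => if j = 0 then ΩA else Us (j - 1)) (k + 1) ⟶
        (fun j => if j = 0 then ΩA else Us (j - 1)) k),
      IsExactSeq (m + 1) (fun j => if j = 0 then ΩA else Us (j - 1)) d

/-- The Igusa–Todorov distance of an abelian category. -/
noncomputable def ITdist (C : Type u) [Category.{v} C] [Abelian C] : ℕ∞ :=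
  sInf {x : ℕ∞ | ∃ m n : ℕ, x = (m : ℕ∞) ∧ IsITCategory C m n}

section Aux

variable {𝒜 : Type u} [Category.{v} 𝒜] [Abelian 𝒜]
variable {ℬ : Type u'} [Category.{v'} ℬ] [Abelian ℬ]

lemma isSyzygy_of_iso {K Y Y' : ℬ} (h : IsSyzygy K Y) (f : Y ≅ Y') : IsSyzygy K Y' := by
  obtain ⟨P, ι, π, w, hP, hSE⟩ := h
  refine ⟨P, ι, π ≫ f.hom, by rw [← Category.assoc, w, zero_comp], hP, ?_⟩
  refine ShortComplex.shortExact_of_iso ?_ hSE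
  exact ShortComplex.isoMk (Iso.refl _) (Iso.refl _) f (by simp) (by simp)

lemma isNthSyzygy_of_iso : ∀ {n : ℕ}, 1 ≤ n → ∀ {K X X' : ℬ},
    IsNthSyzygy n K X → (X ≅ X') → IsNthSyzygy n K X'
  | 1, _, K, X, X', ⟨Y, hY, hsyz⟩, f => ⟨X', rfl, isSyzygy_of_iso hsyz (eqToIso hY ≪≫ f)⟩
  | (n+2), _, K, X, X', ⟨Y, hY, hsyz⟩, f =>
      ⟨Y, isNthSyzygy_of_iso (Nat.le_add_left 1 n) hY f, hsyz⟩

variable (e : 𝒜 ⥤ ℬ) [e.Additive] [PreservesFiniteLimits e] [PreservesFiniteColimits e]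

lemma isSyzygy_map (heproj : ∀ X : 𝒜, Projective X → Projective (e.obj X))
    {K Y : 𝒜} (h : IsSyzygy K Y) : IsSyzygy (e.obj K) (e.obj Y) := by
  obtain ⟨P, ι, π, w, hP, hSE⟩ := h
  exact ⟨e.obj P, e.map ι, e.map π, by rw [← e.map_comp, w, e.map_zero],
    heproj P hP, hSE.map_of_exact e⟩

lemma isNthSyzygy_map (heproj : ∀ X : 𝒜, Projective X → Projective (e.obj X)) :
    ∀ {n : ℕ} {K X : 𝒜},
    IsNthSyzygy n K X → IsNthSyzygy n (e.obj K) (e.obj X)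
  | 0, _, _, h => congrArg e.obj h
  | (n+1), _, _, ⟨Y, hY, hsyz⟩ =>
      ⟨e.obj Y, isNthSyzygy_map heproj hY, isSyzygy_map e heproj hsyz⟩

lemma inAdd_map {U X : 𝒜} (h : InAdd U X) : InAdd (e.obj U) (e.obj X) := by
  obtain ⟨k, s, p, hsp⟩ := h
  exact ⟨k, e.map s ≫ (e.mapBiproduct _).hom, (e.mapBiproduct _).inv ≫ e.map p,
    by rw [Category.assoc, Iso.hom_inv_id_assoc, ← e.map_comp, hsp, e.map_id]⟩

lemma exact_push {m : ℕ} {K : 𝒜} {Us : ℕ → 𝒜}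
    (d : ∀ k : ℕ, (fun j => if j = 0 then K else Us (j - 1)) (k + 1) ⟶
      (fun j => if j = 0 then K else Us (j - 1)) k)
    (h : IsExactSeq (m + 1) (fun j => if j = 0 then K else Us (j - 1)) d)
    {ΩA : ℬ} (φ : e.obj K ≅ ΩA) :
    ∃ d' : ∀ k : ℕ, (fun j => if j = 0 then ΩA else e.obj (Us (j - 1))) (k + 1) ⟶
      (fun j => if j = 0 then ΩA else e.obj (Us (j - 1))) k,
      IsExactSeq (m + 1) (fun j => if j = 0 then ΩA else e.obj (Us (j - 1))) d' := by
  obtain ⟨hMono, hEpi, hEx⟩ := h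
  refine ⟨fun k => match k with
    | 0 => e.map (d 0) ≫ φ.hom
    | (k+1) => e.map (d (k+1)), ?_, ?_, ?_⟩
  · -- Mono at the top
    have : Mono (d (m + 1 - 1)) := hMono
    have hm : Mono (e.map (d (m + 1 - 1))) := preserves_mono_of_preservesLimit e _
    match m with
    | 0 => exact mono_comp _ _
    | (k+1) => exact hm
  · -- Epi at the bottom
    have : Epi (e.map (d 0)) := preserves_epi_of_preservesColimit e _
    exact epi_comp _ _
  · intro j hj
    obtain ⟨w, hw⟩ := hEx j hj
    match j with
    | 0 =>
      refine ⟨by rw [← Category.assoc, ← e.map_comp, w, e.map_zero, zero_comp], ?_⟩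
      refine ShortComplex.exact_of_iso ?_ (hw.map e)
      exact ShortComplex.isoMk (Iso.refl _) (Iso.refl _) φ
        ((Category.id_comp _).trans (Category.comp_id _).symm) (Category.id_comp _)
    | (j+1) =>
      exact ⟨(e.map_comp (d (j+1+1)) (d (j+1))).symm.trans (by rw [w]; exact e.map_zero _ _), hw.map e⟩

end Aux

/-- Let `(ℬ, 𝒜, i, e, l)` be a cleft extension of abelian categories such
that `e` preserves projective objects.  Then `IT(ℬ) ≤ IT(𝒜)`. -/
theorem ITdist_le_of_cleftExtension
    {𝒜 : Type u} [Category.{v} 𝒜] [Abelian 𝒜] [EnoughProjectives 𝒜]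
    {ℬ : Type u'} [Category.{v'} ℬ] [Abelian ℬ] [EnoughProjectives ℬ]
    (i : ℬ ⥤ 𝒜) (e : 𝒜 ⥤ ℬ) (l : ℬ ⥤ 𝒜)
    [i.Additive] [e.Additive] [l.Additive]
    [e.Faithful] [PreservesFiniteLimits e] [PreservesFiniteColimits e]
    (adj : l ⊣ e) (η : i ⋙ e ≅ 𝟭 ℬ)
    (heproj : ∀ X : 𝒜, Projective X → Projective (e.obj X)) :
    ITdist ℬ ≤ ITdist 𝒜 := by
  apply sInf_le_sInf
  rintro x ⟨m, n, rfl, U, hU⟩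
  refine ⟨m, n, rfl, e.obj U, fun A => ?_⟩
  obtain ⟨K, hK, Us, hUs, d, hseq⟩ := hU (i.obj A)
  have hmap : ∀ {ΩA : ℬ} (φ : e.obj K ≅ ΩA), IsNthSyzygy n ΩA A →
      ∃ (ΩB : ℬ), IsNthSyzygy n ΩB A ∧
      ∃ (Us' : ℕ → ℬ) (_ : ∀ k : ℕ, k ≤ m → InAdd (e.obj U) (Us' k))
        (d' : ∀ k : ℕ, (fun j => if j = 0 then ΩB else Us' (j - 1)) (k + 1) ⟶
          (fun j => if j = 0 then ΩB else Us' (j - 1)) k),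
        IsExactSeq (m + 1) (fun j => if j = 0 then ΩB else Us' (j - 1)) d' := by
    intro ΩA φ hΩ
    obtain ⟨d', hd'⟩ := exact_push e d hseq φ
    exact ⟨ΩA, hΩ, fun k => e.obj (Us k),
      fun k hk => inAdd_map e (hUs k hk), d', hd'⟩
  match n, hK with
  | 0, hK =>
    exact hmap (e.mapIso (eqToIso hK) ≪≫ η.app A) rfl
  | (n+1), hK =>
    refine hmap (Iso.refl _) ?_
    exact isNthSyzygy_of_iso (Nat.le_add_left 1 n)
      (isNthSyzygy_map e heproj hK) (η.app A)
end
end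

section
/- Let (ℬ, 𝒜, i, e, l) be a cleft extension of abelian categories with l exact, and suppose Fⁿ = 0 for a positive integer n. Then every object X of 𝒜 admits an exact sequence 0 → l(F^{n-1}(e(X))) → l(F^{n-2}(e(X))) → ⋯ → l(F(e(X))) → l(e(X)) → X → 0 in 𝒜. -/
open CategoryTheory Limits

universe v u v' u'

/-- Kernels of two retractions of a common section are isomorphic. -/
noncomputable def kerRetrIso {C : Type*} [Category C] [Abelian C] {E B : C}
    (s : B ⟶ E) (r₁ r₂ : E ⟶ B) (h₁ : s ≫ r₁ = 𝟙 B) (h₂ : s ≫ r₂ = 𝟙 B) :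
    kernel r₁ ≅ kernel r₂ where
  hom := kernel.lift r₂ (kernel.ι r₁ ≫ (𝟙 E - r₂ ≫ s)) (by
    simp [Preadditive.sub_comp, Preadditive.comp_sub, Category.assoc, h₂])
  inv := kernel.lift r₁ (kernel.ι r₂ ≫ (𝟙 E - r₁ ≫ s)) (by
    simp [Preadditive.sub_comp, Preadditive.comp_sub, Category.assoc, h₁])
  hom_inv_id := by
    apply equalizer.hom_ext
    simp [Preadditive.sub_comp, Preadditive.comp_sub, reassoc_of% h₁, reassoc_of% h₂]
  inv_hom_id := by
    apply equalizer.hom_ext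
    simp [Preadditive.sub_comp, Preadditive.comp_sub, reassoc_of% h₁, reassoc_of% h₂]

/-- Let `(ℬ, 𝒜, i, e, l)` be a cleft extension of abelian categories with
`l` exact, and suppose the induced endofunctor `F` satisfies `Fⁿ = 0` for a positive integer
`n`.  Then every object `X` of `𝒜` admits an exact sequence
`0 → l(F^{n-1}(e(X))) → ⋯ → l(F(e(X))) → l(e(X)) → X → 0` in `𝒜`. -/
theorem cleftExtension_resolution
    {𝒜 : Type u} [Category.{v} 𝒜] [Abelian 𝒜] [EnoughProjectives 𝒜]
    {ℬ : Type u'} [Category.{v'} ℬ] [Abelian ℬ] [EnoughProjectives ℬ]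
    (i : ℬ ⥤ 𝒜) (e : 𝒜 ⥤ ℬ) (l : ℬ ⥤ 𝒜)
    [i.Additive] [e.Additive] [l.Additive]
    [e.Faithful] [PreservesFiniteLimits e] [PreservesFiniteColimits e]
    [PreservesFiniteLimits l] [PreservesFiniteColimits l]
    (adj : l ⊣ e) (η : i ⋙ e ≅ 𝟭 ℬ)
    (G : 𝒜 ⥤ 𝒜) (κ : G ⟶ e ⋙ l) (hκ : ∀ X : 𝒜, κ.app X ≫ adj.counit.app X = 0)
    (hker : ∀ X : 𝒜, IsLimit (KernelFork.ofι (κ.app X) (hκ X)))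
    (F : ℬ ⥤ ℬ) (hFG : F ≅ i ⋙ G ⋙ e)
    (n : ℕ) (hn : 0 < n) (hFn : ∀ B : ℬ, IsZero ((fpow F n).obj B))
    (X : 𝒜) :
    ∃ d : ∀ k : ℕ, (fun j => if j = 0 then X
          else l.obj ((fpow F (j - 1)).obj (e.obj X))) (k + 1) ⟶
        (fun j => if j = 0 then X else l.obj ((fpow F (j - 1)).obj (e.obj X))) k,
      IsExactSeq n (fun j => if j = 0 then X
        else l.obj ((fpow F (j - 1)).obj (e.obj X))) d := by
  classical
  obtain ⟨m, rfl⟩ : ∃ m, n = m + 1 := ⟨n - 1, (Nat.succ_pred_eq_of_pos hn).symm⟩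
  -- the counit is objectwise epi
  have hμepi : ∀ A : 𝒜, Epi (adj.counit.app A) := fun A => by
    have hsplit : IsSplitEpi (e.map (adj.counit.app A)) :=
      ⟨⟨⟨adj.unit.app (e.obj A), adj.right_triangle_components A⟩⟩⟩
    exact e.epi_of_epi_map hsplit.epi
  -- κ is objectwise mono
  have hκmono : ∀ A : 𝒜, Mono (κ.app A) := fun A => mono_of_isLimit_fork (hker A)
  -- the key isomorphism  e ∘ G ≅ F ∘ e  (objectwise)
  have w : ∀ A : 𝒜, e.obj (G.obj A) ≅ F.obj (e.obj A) := by
    intro A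
    -- two retractions of the unit at e A
    set B := e.obj A
    set s : B ⟶ e.obj (l.obj B) := adj.unit.app B with hs
    set r₁ : e.obj (l.obj B) ⟶ B := e.map (adj.counit.app A) with hr₁
    set r₂ : e.obj (l.obj B) ⟶ B :=
      e.map (l.map (η.inv.app B)) ≫
        (e.map (adj.counit.app (i.obj B)) ≫ η.hom.app B) with hr₂
    have h₁ : s ≫ r₁ = 𝟙 B := adj.right_triangle_components A
    have h₂ : s ≫ r₂ = 𝟙 B := by
      have hnat : adj.unit.app B ≫ e.map (l.map (η.inv.app B)) =
          η.inv.app B ≫ adj.unit.app (e.obj (i.obj B)) := by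
        exact (adj.unit.naturality (η.inv.app B)).symm
      rw [hs, hr₂, ← Category.assoc, hnat]
      simp
    -- e (G A) is the kernel of r₁
    have lim₁ : IsLimit (KernelFork.ofι (e.map (κ.app A))
        ((KernelFork.ofι (κ.app A) (hκ A)).map_condition e)) :=
      KernelFork.mapIsLimit _ (hker A) e
    have iso₁ := lim₁.conePointUniqueUpToIso (kernelIsKernel r₁)
    -- e (G (i B)) is the kernel of  e (counit at i B)
    have lim₂ : IsLimit (KernelFork.ofι (e.map (κ.app (i.obj B)))
        ((KernelFork.ofι (κ.app (i.obj B)) (hκ (i.obj B))).map_condition e)) :=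
      KernelFork.mapIsLimit _ (hker (i.obj B)) e
    have iso₂ := (kernelIsKernel (e.map (adj.counit.app (i.obj B)))).conePointUniqueUpToIso lim₂
    exact iso₁ ≪≫ kerRetrIso s r₁ r₂ h₁ h₂ ≪≫
      kernelIsIsoComp (e.map (l.map (η.inv.app B)))
        (e.map (adj.counit.app (i.obj B)) ≫ η.hom.app B) ≪≫
      kernelCompMono (e.map (adj.counit.app (i.obj B))) (η.hom.app B) ≪≫
      iso₂ ≪≫ (hFG.app B).symm
  -- iterated isomorphism  e (Gᵏ X) ≅ Fᵏ (e X)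
  let ek : ∀ k : ℕ, e.obj ((fpow G k).obj X) ≅ (fpow F k).obj (e.obj X) := fun k =>
    Nat.rec (motive := fun k => e.obj ((fpow G k).obj X) ≅ (fpow F k).obj (e.obj X))
      (Iso.refl (e.obj X))
      (fun k ih => w ((fpow G k).obj X) ≪≫ F.mapIso ih) k
  -- G^(m+1) X is zero
  have hGzero : IsZero ((fpow G (m + 1)).obj X) := by
    have h1 : IsZero (e.obj ((fpow G (m + 1)).obj X)) :=
      (hFn (e.obj X)).of_iso (ek (m + 1))
    rw [IsZero.iff_id_eq_zero]
    apply e.map_injective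
    rw [e.map_id, e.map_zero]
    exact h1.eq_of_src _ _
  -- counit at G^m X is mono
  have hμmono : Mono (adj.counit.app ((fpow G m).obj X)) := by
    apply Preadditive.mono_of_cancel_zero
    intro W u hu
    obtain ⟨t, ht⟩ := KernelFork.IsLimit.lift' (hker ((fpow G m).obj X)) u hu
    rw [← ht, hGzero.eq_of_tgt t 0]
    exact zero_comp
  -- abbreviations
  set A : ℕ → 𝒜 := fun k => (fpow G k).obj X with hA
  set Y : ℕ → 𝒜 := fun j => if j = 0 then X
    else l.obj ((fpow F (j - 1)).obj (e.obj X)) with hY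
  let σ : ∀ k, (Y (k + 1) ⟶ l.obj (e.obj (A k))) × (l.obj (e.obj (A k)) ⟶ Y (k + 1)) :=
    fun k => ((l.mapIso (ek k).symm).hom, (l.mapIso (ek k).symm).inv)
  have σiso : ∀ k, IsIso (σ k).1 := fun k => inferInstanceAs (IsIso (l.mapIso _).hom)
  have σinv : ∀ k, (σ k).2 ≫ (σ k).1 = 𝟙 _ := fun k => (l.mapIso (ek k).symm).inv_hom_id
  let rest : ∀ k, A k ⟶ Y k := fun k =>
    Nat.casesOn (motive := fun k => A k ⟶ Y k) k (𝟙 X)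
      (fun k => κ.app (A k) ≫ (σ k).2)
  have restmono : ∀ k, Mono (rest k) := by
    intro k
    cases k with
    | zero => exact inferInstanceAs (Mono (𝟙 X))
    | succ k =>
      have : Mono (κ.app (A k)) := hκmono _
      have : IsIso (σ k).2 := inferInstanceAs (IsIso (l.mapIso _).inv)
      exact @mono_comp _ _ _ _ _ (κ.app (A k)) (hκmono _) (σ k).2 inferInstance
  refine ⟨fun k => (σ k).1 ≫ adj.counit.app (A k) ≫ rest k, ?_, ?_, ?_⟩
  · -- mono at the left end : d m  (note (m+1)-1 = m definitionally)
    show Mono ((σ m).1 ≫ adj.counit.app (A m) ≫ rest m)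
    haveI h1 : IsIso (σ m).1 := σiso m
    haveI h1m : Mono (σ m).1 := IsIso.mono_of_iso _
    haveI h2 : Mono (adj.counit.app (A m)) := hμmono
    haveI h3 : Mono (rest m) := restmono m
    haveI h4 : Mono (adj.counit.app (A m) ≫ rest m) := mono_comp _ _
    exact mono_comp _ _
  · -- epi at the right end : d 0
    show Epi ((σ 0).1 ≫ adj.counit.app (A 0) ≫ rest 0)
    haveI h1 : IsIso (σ 0).1 := σiso 0
    haveI h1e : Epi (σ 0).1 := IsIso.epi_of_iso _
    haveI h2 : Epi (adj.counit.app (A 0)) := hμepi (A 0)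
    haveI h3 : Epi (rest 0) := inferInstanceAs (Epi (𝟙 X))
    haveI h4 : Epi (adj.counit.app (A 0) ≫ rest 0) := epi_comp _ _
    exact epi_comp _ _
  · intro j hj
    have hκ' : ∀ (A' : 𝒜) {Z : 𝒜} (h : A' ⟶ Z),
        κ.app A' ≫ adj.counit.app A' ≫ h = 0 := by
      intro A' Z h
      rw [← Category.assoc, hκ, zero_comp]
    have σinv' : ∀ (k : ℕ) {Z : 𝒜} (h : l.obj (e.obj (A k)) ⟶ Z),
        (σ k).2 ≫ (σ k).1 ≫ h = h := by
      intro k Z h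
      rw [← Category.assoc, σinv, Category.id_comp]
    have hw : ((σ (j + 1)).1 ≫ adj.counit.app (A (j + 1)) ≫ rest (j + 1)) ≫
        ((σ j).1 ≫ adj.counit.app (A j) ≫ rest j) = 0 := by
      show ((σ (j + 1)).1 ≫ adj.counit.app (A (j + 1)) ≫ (κ.app (A j) ≫ (σ j).2)) ≫
        ((σ j).1 ≫ adj.counit.app (A j) ≫ rest j) = 0
      simp only [Category.assoc, Iso.inv_hom_id_assoc]
      have e1 : (κ.app (A j) ≫ (σ j).2) ≫ (σ j).1 ≫ adj.counit.app (A j) ≫ rest j = 0 := by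
        rw [Category.assoc, σinv' j, hκ' (A j)]
      exact (congrArg (fun t => (σ (j + 1)).1 ≫ adj.counit.app (A (j + 1)) ≫ t) e1).trans
        ((congrArg (fun t => (σ (j + 1)).1 ≫ t) Limits.comp_zero).trans Limits.comp_zero)
    refine ⟨hw, ?_⟩
    -- the basic exact complex  G(A j) → l e (A j) → A j
    have Texact : (ShortComplex.mk (κ.app (A j)) (adj.counit.app (A j)) (hκ (A j))).Exact :=
      ShortComplex.exact_of_f_is_kernel _ (hker (A j))
    -- postcompose the last map with the mono `rest j`
    have T'w : κ.app (A j) ≫ adj.counit.app (A j) ≫ rest j = 0 := hκ' (A j) (rest j)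
    let T := ShortComplex.mk (κ.app (A j)) (adj.counit.app (A j)) (hκ (A j))
    let T' := ShortComplex.mk (κ.app (A j)) (adj.counit.app (A j) ≫ rest j) T'w
    let φ₁ : T ⟶ T' :=
      { τ₁ := 𝟙 _, τ₂ := 𝟙 _, τ₃ := rest j
        comm₁₂ := by simp [T, T']
        comm₂₃ := by simp [T, T'] }
    haveI : Epi φ₁.τ₁ := by show Epi (𝟙 _); infer_instance
    haveI : IsIso φ₁.τ₂ := by show IsIso (𝟙 _); infer_instance
    haveI : Mono φ₁.τ₃ := by show Mono (rest j); exact restmono j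
    have T'exact : T'.Exact :=
      (ShortComplex.exact_iff_of_epi_of_isIso_of_mono φ₁).1 Texact
    -- compare with the complex in the statement
    let S := ShortComplex.mk
      ((σ (j + 1)).1 ≫ adj.counit.app (A (j + 1)) ≫ rest (j + 1))
      ((σ j).1 ≫ adj.counit.app (A j) ≫ rest j) hw
    have hcomm : ((σ (j + 1)).1 ≫ adj.counit.app (A (j + 1))) ≫ κ.app (A j) =
        ((σ (j + 1)).1 ≫ adj.counit.app (A (j + 1)) ≫ rest (j + 1)) ≫ (σ j).1 := by
      show ((σ (j + 1)).1 ≫ adj.counit.app (A (j + 1))) ≫ κ.app (A j) =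
        ((σ (j + 1)).1 ≫ adj.counit.app (A (j + 1)) ≫ (κ.app (A j) ≫ (σ j).2)) ≫ (σ j).1
      have e2 : (κ.app (A j) ≫ (σ j).2) ≫ (σ j).1 = κ.app (A j) := by
        rw [Category.assoc, σinv]
        exact Category.comp_id _
      exact (Category.assoc ((σ (j + 1)).1) (adj.counit.app (A (j + 1))) (κ.app (A j))).trans
        ((congrArg (fun t => (σ (j + 1)).1 ≫ adj.counit.app (A (j + 1)) ≫ t) e2.symm).trans
          ((congrArg (fun t => (σ (j + 1)).1 ≫ t) (Category.assoc (adj.counit.app (A (j + 1)))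
            (κ.app (A j) ≫ (σ j).2) (σ j).1).symm).trans
            (Category.assoc ((σ (j + 1)).1) (adj.counit.app (A (j + 1)) ≫ (κ.app (A j) ≫ (σ j).2))
              (σ j).1).symm))
    let φ₂ : S ⟶ T' :=
      { τ₁ := (σ (j + 1)).1 ≫ adj.counit.app (A (j + 1))
        τ₂ := (σ j).1
        τ₃ := 𝟙 _
        comm₁₂ := hcomm
        comm₂₃ := by simp [S, T'] }
    haveI : IsIso φ₂.τ₂ := by show IsIso (σ j).1; exact σiso j
    haveI : Mono φ₂.τ₃ := IsIso.mono_of_iso _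
    haveI : Epi φ₂.τ₁ := by
      show Epi ((σ (j + 1)).1 ≫ adj.counit.app (A (j + 1)))
      have := σiso (j + 1)
      have := hμepi (A (j + 1))
      exact epi_comp _ _
    exact (ShortComplex.exact_iff_of_epi_of_isIso_of_mono φ₂).2 T'exact
end

section
/- Let (ℬ, 𝒜, i, e, r) be a cleft coextension of abelian categories, and suppose F'ⁿ = 0 for a positive integer n. Then every object X of 𝒜 admits an exact sequence 0 → X → r(e(X)) → r(F'(e(X))) → ⋯ → r(F'^{n-1}(e(X))) → 0 in 𝒜. -/
/-!
Put `Aₖ = G'ᵏ X`. Since `e` is faithful the unit is a monomorphism, so the sequences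
`0 → Aₖ → r e Aₖ → Aₖ₊₁ → 0` are short exact. Applying `e` splits them through the counit, so
`e (G' M)` is the kernel of `ε (e M)` and depends on `e M` only; comparing `M` with `i (e M)` gives
`e (G' M) ≅ F' (e M)`, hence `e Aₖ ≅ F'ᵏ (e X)`. So `e Aₙ = 0`, hence `Aₙ = 0` as `e` is faithful,
and splicing the `n` short exact sequences gives the coresolution.
-/

open CategoryTheory Limits

universe v u v' u'

namespace CategoryTheory

section

variable {C : Type*} [Category C] [Abelian C]

lemma ShortComplex.Exact.epi_comp_comp_mono {X₀ X₁ X₂ X₃ X₄ : C} {f : X₁ ⟶ X₂} {g : X₂ ⟶ X₃}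
    {w : f ≫ g = 0} (hS : (ShortComplex.mk f g w).Exact) (a : X₀ ⟶ X₁) [Epi a]
    (m : X₃ ⟶ X₄) [Mono m] :
    (ShortComplex.mk (a ≫ f) (g ≫ m) (by simp [reassoc_of% w])).Exact := by
  let T := ShortComplex.mk f (g ≫ m) (by simp [reassoc_of% w])
  have hT : T.Exact := (ShortComplex.exact_iff_of_epi_of_isIso_of_mono
    (S₁ := ShortComplex.mk f g w) (S₂ := T) { τ₁ := 𝟙 _, τ₂ := 𝟙 _, τ₃ := m }).1 hS
  exact (ShortComplex.exact_iff_of_epi_of_isIso_of_mono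
    (S₁ := ShortComplex.mk (a ≫ f) (g ≫ m) _) (S₂ := T)
    { τ₁ := a, τ₂ := 𝟙 _, τ₃ := 𝟙 _ }).2 hT

theorem isExactSeq_of_epi_mono_factorization {N : ℕ} (hN : 0 < N) {X K : ℕ → C}
    (q : ∀ k, X (k + 1) ⟶ K k) (μ : ∀ k, K k ⟶ X k)
    (hq : ∀ k < N, Epi (q k)) (hμ : ∀ k < N, Mono (μ k))
    (hexact : ∀ k, k + 2 ≤ N →
      ∃ w : μ (k + 1) ≫ q k = 0, (ShortComplex.mk _ _ w).Exact)
    (htop : Mono (q (N - 1))) (hbot : Epi (μ 0)) :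
    IsExactSeq N X (fun k => q k ≫ μ k) := by
  refine ⟨?_, ?_, fun k hk => ?_⟩
  · have := hμ (N - 1) (by omega)
    exact mono_comp _ _
  · have := hq 0 hN
    exact epi_comp _ _
  · obtain ⟨w, hS⟩ := hexact k hk
    have := hq (k + 1) (by omega)
    have := hμ k (by omega)
    exact ⟨_, hS.epi_comp_comp_mono _ _⟩

theorem exists_isExactSeq_splice {A R : ℕ → C} (μ : ∀ k, A k ⟶ R k)
    (q : ∀ k, R k ⟶ A (k + 1)) (w : ∀ k, μ k ≫ q k = 0)
    (hS : ∀ k, (ShortComplex.mk (μ k) (q k) (w k)).ShortExact)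
    {n : ℕ} (hn : 0 < n) (hA : IsZero (A n)) :
    ∃ d : ∀ k : ℕ, (fun j => if j = n then A 0 else R (n - 1 - j)) (k + 1) ⟶
        (fun j => if j = n then A 0 else R (n - 1 - j)) k,
      IsExactSeq n (fun j => if j = n then A 0 else R (n - 1 - j)) d := by
  -- the `k`-th differential factors through `A (n - 1 - k)`
  let q' (k : ℕ) : (if k + 1 = n then A 0 else R (n - 1 - (k + 1))) ⟶ A (n - 1 - k) :=
    if h : k + 1 = n then eqToHom (by rw [if_pos h, show n - 1 - k = 0 by omega])
    else if h' : k + 1 < n then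
      eqToHom (if_neg h) ≫ q (n - 1 - (k + 1)) ≫ eqToHom (by congr 1; omega)
    else 0
  let μ' (k : ℕ) : A (n - 1 - k) ⟶ (if k = n then A 0 else R (n - 1 - k)) :=
    if h : k = n then 0 else μ (n - 1 - k) ≫ eqToHom (if_neg h).symm
  refine ⟨_, isExactSeq_of_epi_mono_factorization hn q' μ' (fun k hk => ?_) (fun k hk => ?_)
    (fun k hk => ?_) ?_ ?_⟩
  · dsimp only [q']
    by_cases h : k + 1 = n
    · rw [dif_pos h]
      infer_instance
    · have := (hS (n - 1 - (k + 1))).epi_g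
      rw [dif_neg h, dif_pos (by omega)]
      infer_instance
  · have := (hS (n - 1 - k)).mono_f
    dsimp only [μ']
    rw [dif_neg (by omega)]
    infer_instance
  · have hk₁ : k + 1 ≠ n := by omega
    have hk₂ : k + 1 < n := by omega
    dsimp only [q', μ']
    rw [dif_neg hk₁, dif_neg hk₁, dif_pos hk₂]
    refine ⟨by simp [reassoc_of% (w _)], ShortComplex.exact_of_iso (ShortComplex.isoMk
      (S₁ := ShortComplex.mk _ _ (w _)) (Iso.refl _) (eqToIso (if_neg hk₁).symm)
      (eqToIso (congrArg A (show n - 1 - (k + 1) + 1 = n - 1 - k by omega)))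
      (by simp) (by simp)) (hS _).exact⟩
  · dsimp only [q']
    rw [dif_pos (by omega)]
    infer_instance
  · have : IsZero (A (n - 1 + 1)) := by rwa [Nat.sub_add_cancel hn]
    have := (hS (n - 1)).exact.epi_f (this.eq_of_tgt _ _)
    dsimp only [μ']
    rw [dif_neg (by omega)]
    infer_instance

noncomputable def cokernelIsoKernelOfRetraction {A B Q : C} {f : A ⟶ B} {ρ : B ⟶ A}
    (hf : f ≫ ρ = 𝟙 A) {π : B ⟶ Q} {w : f ≫ π = 0} (hc : IsColimit (CokernelCofork.ofπ π w)) :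
    Q ≅ kernel ρ :=
  let σ := ShortComplex.Splitting.ofExactOfRetraction (ShortComplex.mk f π w)
    (ShortComplex.exact_of_g_is_cokernel _ hc) ρ hf (epi_of_isColimit_cofork hc)
  -- exchanging the roles of section and retraction in `σ` splits `0 → Q → B → A → 0`
  let τ : (ShortComplex.mk σ.s ρ σ.s_r).Splitting :=
    { r := π, s := f, f_r := σ.s_g, s_g := hf, id := by rw [add_comm]; exact σ.id }
  IsLimit.conePointUniqueUpToIso τ.fIsKernel (limit.isLimit _)

end

lemma Functor.isZero_of_isZero_obj {C D : Type*} [Category C] [Category D]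
    [HasZeroMorphisms C] [HasZeroMorphisms D] (F : C ⥤ D) [F.Faithful]
    [F.PreservesZeroMorphisms] {X : C} (hX : IsZero (F.obj X)) : IsZero X := by
  rw [IsZero.iff_id_eq_zero]
  exact F.map_injective (by simpa using hX.eq_of_src _ _)

def fpowObjIso {C D : Type*} [Category C] [Category D] (e : C ⥤ D) (G : C ⥤ C) (F : D ⥤ D)
    (ψ : ∀ M, e.obj (G.obj M) ≅ F.obj (e.obj M)) :
    ∀ (k : ℕ) (M : C), e.obj ((fpow G k).obj M) ≅ (fpow F k).obj (e.obj M)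
  | 0, _ => Iso.refl _
  | k + 1, M => ψ _ ≪≫ F.mapIso (fpowObjIso e G F ψ k M)

namespace Adjunction

variable {𝒜 ℬ : Type*} [Category 𝒜] [Category ℬ] {e : 𝒜 ⥤ ℬ} {r : ℬ ⥤ 𝒜} (adj : e ⊣ r)

noncomputable def kernelCounitAppIso [HasZeroMorphisms ℬ] [HasKernels ℬ] {B B' : ℬ}
    (u : B ≅ B') : kernel (adj.counit.app B) ≅ kernel (adj.counit.app B') :=
  kernel.mapIso _ _ ((r ⋙ e).mapIso u) u (adj.counit.naturality u.hom).symm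

variable [Abelian 𝒜] {G' : 𝒜 ⥤ 𝒜} {p : e ⋙ r ⟶ G'}

lemma shortExact_unit_comp_iso [e.Faithful] (hp : ∀ X, adj.unit.app X ≫ p.app X = 0)
    (hcoker : ∀ X, IsColimit (CokernelCofork.ofπ (p.app X) (hp X))) (M : 𝒜) {B : ℬ}
    (u : e.obj M ≅ B) :
    (ShortComplex.mk (adj.unit.app M ≫ r.map u.hom) (r.map u.inv ≫ p.app M)
      (by simp [hp])).ShortExact := by
  have hM : (ShortComplex.mk (adj.unit.app M) (p.app M) (hp M)).ShortExact :=
    .mk' (ShortComplex.exact_of_g_is_cokernel _ (hcoker M)) inferInstance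
      (epi_of_isColimit_cofork (hcoker M))
  exact ShortComplex.shortExact_of_iso (ShortComplex.isoMk (S₁ := ShortComplex.mk _ _ (hp M))
    (Iso.refl _) (r.mapIso u) (Iso.refl _) (by simp) (by simp)) hM

variable [Abelian ℬ] [e.PreservesZeroMorphisms] [PreservesFiniteColimits e]

noncomputable def objIsoKernelCounitApp (hp : ∀ X, adj.unit.app X ≫ p.app X = 0)
    (hcoker : ∀ X, IsColimit (CokernelCofork.ofπ (p.app X) (hp X))) (M : 𝒜) :
    e.obj (G'.obj M) ≅ kernel (adj.counit.app (e.obj M)) :=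
  cokernelIsoKernelOfRetraction (adj.left_triangle_components M)
    (isColimitCoforkMapOfIsColimit' e (hp M) (hcoker M))

noncomputable def objIsoOfCleft (hp : ∀ X, adj.unit.app X ≫ p.app X = 0)
    (hcoker : ∀ X, IsColimit (CokernelCofork.ofπ (p.app X) (hp X)))
    {i : ℬ ⥤ 𝒜} (η : i ⋙ e ≅ 𝟭 ℬ) {F' : ℬ ⥤ ℬ} (hF' : F' ≅ i ⋙ G' ⋙ e) (M : 𝒜) :
    e.obj (G'.obj M) ≅ F'.obj (e.obj M) :=
  adj.objIsoKernelCounitApp hp hcoker M ≪≫ adj.kernelCounitAppIso (η.app (e.obj M)).symm ≪≫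
    (adj.objIsoKernelCounitApp hp hcoker (i.obj (e.obj M))).symm ≪≫ (hF'.app (e.obj M)).symm

end Adjunction

end CategoryTheory

theorem cleftCoextension_coresolution_general
    {𝒜 : Type u} [Category.{v} 𝒜] [Abelian 𝒜]
    {ℬ : Type u'} [Category.{v'} ℬ] [Abelian ℬ]
    (i : ℬ ⥤ 𝒜) (e : 𝒜 ⥤ ℬ) (r : ℬ ⥤ 𝒜)
    [e.Additive] [e.Faithful] [PreservesFiniteColimits e]
    (adj : e ⊣ r) (η : i ⋙ e ≅ 𝟭 ℬ)
    (G' : 𝒜 ⥤ 𝒜) (p : (e ⋙ r : 𝒜 ⥤ 𝒜) ⟶ G')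
    (hp : ∀ X : 𝒜, adj.unit.app X ≫ p.app X = 0)
    (hcoker : ∀ X : 𝒜, IsColimit (CokernelCofork.ofπ (p.app X) (hp X)))
    (F' : ℬ ⥤ ℬ) (hF' : F' ≅ i ⋙ G' ⋙ e)
    (n : ℕ) (hn : 0 < n) (hFn : ∀ B : ℬ, IsZero ((fpow F' n).obj B))
    (X : 𝒜) :
    ∃ d : ∀ k : ℕ, (fun j => if j = n then X
          else r.obj ((fpow F' (n - 1 - j)).obj (e.obj X))) (k + 1) ⟶
        (fun j => if j = n then X else r.obj ((fpow F' (n - 1 - j)).obj (e.obj X))) k,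
      IsExactSeq n (fun j => if j = n then X
        else r.obj ((fpow F' (n - 1 - j)).obj (e.obj X))) d := by
  let φ := fpowObjIso e G' F' (adj.objIsoOfCleft hp hcoker η hF')
  have hzero : IsZero ((fpow G' n).obj X) := e.isZero_of_isZero_obj ((hFn _).of_iso (φ n X))
  exact exists_isExactSeq_splice _ _ _
    (fun k => adj.shortExact_unit_comp_iso hp hcoker _ (φ k X)) hn hzero

/-- Let `(ℬ, 𝒜, i, e, r)` be a cleft coextension of abelian categories and
suppose the induced endofunctor `F'` satisfies `F'ⁿ = 0` for a positive integer `n`.  Then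
every object `X` of `𝒜` admits an exact sequence
`0 → X → r(e(X)) → r(F'(e(X))) → ⋯ → r(F'^{n-1}(e(X))) → 0` in `𝒜`.
(In the indexing below, the object in homological position `j` with `j < n` is
`r(F'^{n-1-j}(e(X)))`, and the object in position `n` is `X`.) -/
theorem cleftCoextension_coresolution
    {𝒜 : Type u} [Category.{v} 𝒜] [Abelian 𝒜] [EnoughProjectives 𝒜]
    {ℬ : Type u'} [Category.{v'} ℬ] [Abelian ℬ] [EnoughProjectives ℬ]
    (i : ℬ ⥤ 𝒜) (e : 𝒜 ⥤ ℬ) (r : ℬ ⥤ 𝒜)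
    [i.Additive] [e.Additive] [r.Additive]
    [e.Faithful] [PreservesFiniteLimits e] [PreservesFiniteColimits e]
    (adj : e ⊣ r) (η : i ⋙ e ≅ 𝟭 ℬ)
    (G' : 𝒜 ⥤ 𝒜) (p : (e ⋙ r : 𝒜 ⥤ 𝒜) ⟶ G')
    (hp : ∀ X : 𝒜, adj.unit.app X ≫ p.app X = 0)
    (hcoker : ∀ X : 𝒜, IsColimit (CokernelCofork.ofπ (p.app X) (hp X)))
    (F' : ℬ ⥤ ℬ) (hF' : F' ≅ i ⋙ G' ⋙ e)
    (n : ℕ) (hn : 0 < n) (hFn : ∀ B : ℬ, IsZero ((fpow F' n).obj B))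
    (X : 𝒜) :
    ∃ d : ∀ k : ℕ, (fun j => if j = n then X
          else r.obj ((fpow F' (n - 1 - j)).obj (e.obj X))) (k + 1) ⟶
        (fun j => if j = n then X else r.obj ((fpow F' (n - 1 - j)).obj (e.obj X))) k,
      IsExactSeq n (fun j => if j = n then X
        else r.obj ((fpow F' (n - 1 - j)).obj (e.obj X))) d :=
  cleftCoextension_coresolution_general i e r adj η G' p hp hcoker F' hF' n hn hFn X
end
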